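/- Let (T,c) be an algebraic tree and ρ ∈ T. Define x ≤_ρ y iff x ∈ [ρ,y], where [ρ,y]={w : c(ρ,y,w)=w}. Then ≤_ρ is a partial order on T, and for all x,y ∈ T the infimum of x and y with respect to ≤_ρ exists and equals c(ρ,x,y). -/

import Mathlib

variable {T : Type*}

/-- An algebraic tree: a symmetric branch point map satisfying the
2-point, 3-point and 4-point conditions (BPM1)–(BPM4). -/
def IsAlgTree (c : T → T → T → T) : Prop :=
  (∀ x y z, c x y z = c y x z) ∧
  (∀ x y z, c x y z = c x z y) ∧
  (∀ x y, c x y y = y) ∧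
  (∀ x y z, c x y (c x y z) = c x y z) ∧
  (∀ x₁ x₂ x₃ x₄, c x₁ x₂ x₃ = c x₁ x₂ x₄ ∨ c x₁ x₂ x₃ = c x₁ x₃ x₄ ∨
    c x₁ x₂ x₃ = c x₂ x₃ x₄)

/-- The interval `[x,y] = {w : c(x,y,w) = w}`. -/
def interval (c : T → T → T → T) (x y : T) : Set T := {w | c x y w = w}

/-! Every claim comes from the 4-point condition applied to a quadruple containing `ρ`: each of
its three alternatives either gives the claim directly or forces two of the points to coincide. -/

namespace IsAlgTree

variable {c : T → T → T → T} (hc : IsAlgTree c)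
include hc

theorem comm_left (x y z : T) : c x y z = c y x z := hc.1 x y z

theorem comm_right (x y z : T) : c x y z = c x z y := hc.2.1 x y z

theorem apply_self_right (x y : T) : c x y y = y := hc.2.2.1 x y

theorem four_point (x₁ x₂ x₃ x₄ : T) :
    c x₁ x₂ x₃ = c x₁ x₂ x₄ ∨ c x₁ x₂ x₃ = c x₁ x₃ x₄ ∨ c x₁ x₂ x₃ = c x₂ x₃ x₄ :=
  hc.2.2.2.2 x₁ x₂ x₃ x₄

theorem right_mem_interval (x y : T) : y ∈ interval c x y := hc.apply_self_right x y

theorem median_mem_interval (x y z : T) : c x y z ∈ interval c x y := hc.2.2.2.1 x y z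

theorem median_mem_interval' (x y z : T) : c x y z ∈ interval c x z := by
  rw [hc.comm_right x y z]
  exact hc.median_mem_interval x z y

theorem eq_of_mem_interval_of_mem_interval {ρ x y : T} (hx : x ∈ interval c ρ y)
    (hy : y ∈ interval c ρ x) : x = y :=
  calc x = c ρ y x := hx.symm
    _ = c ρ x y := hc.comm_right ρ y x
    _ = y := hy

theorem mem_interval_trans {ρ x y z : T} (hxy : x ∈ interval c ρ y)
    (hyz : y ∈ interval c ρ z) : x ∈ interval c ρ z := by
  have hx : c ρ x y = x := (hc.comm_right ρ x y).trans hxy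
  have hy : c ρ y z = y := (hc.comm_right ρ y z).trans hyz
  suffices c ρ x z = x from (hc.comm_right ρ z x).trans this
  rcases hc.four_point ρ x y z with h | h | h
  · rw [← h, hx]
  · obtain rfl : x = y := by rw [← hx, h, hy]
    exact hy
  · rcases hc.four_point ρ x z y with h' | h' | h'
    · rw [h', hx]
    · have hxz : c ρ x z = y := by rw [h', hc.comm_right, hy]
      have hxz_mem : c ρ x z ∈ interval c ρ x := hc.median_mem_interval ρ x z
      rw [hxz] at hxz_mem ⊢
      exact hc.eq_of_mem_interval_of_mem_interval hxz_mem hxy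
    · rw [h', hc.comm_right x z y, ← h, hx]

/-- Points `ρ, v, m, x` in this order along the segment `[ρ, x]`. -/
theorem mem_interval_of_between {ρ x v m : T} (hv : v ∈ interval c ρ x)
    (hm : m ∈ interval c ρ x) (hmv : m ∈ interval c x v) : v ∈ interval c ρ m := by
  show c ρ m v = v
  rw [hc.comm_right]
  have hv_or_hm : c ρ v m = v ∨ c ρ v m = m := by
    rcases hc.four_point ρ v m x with h | h | h
    · left; rw [h, hc.comm_right]; exact hv
    · right; rw [h, hc.comm_right]; exact hm
    · right; rw [h, hc.comm_right, hc.comm_left]; exact hmv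
  rcases hv_or_hm with h | h
  · exact h
  · obtain rfl : v = m := by
      rcases hc.four_point ρ x v m with h' | h' | h' <;> rw [hv] at h' <;> rw [h']
      exacts [hm, h, hmv]
    exact hc.apply_self_right ρ v

theorem mem_interval_median {ρ x y v : T} (hx : v ∈ interval c ρ x) (hy : v ∈ interval c ρ y) :
    v ∈ interval c ρ (c ρ x y) := by
  rcases hc.four_point ρ x y v with h | h | h
  · exact (h.trans hx) ▸ hc.right_mem_interval ρ v
  · exact (h.trans hy) ▸ hc.right_mem_interval ρ v
  · refine hc.mem_interval_of_between hx (hc.median_mem_interval ρ x y) ?_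
    rw [h]
    exact hc.median_mem_interval' x y v

end IsAlgTree

theorem stmt_8_general (c : T → T → T → T) (hc : IsAlgTree c) (ρ : T) :
    (∀ x, x ∈ interval c ρ x) ∧
    (∀ x y, x ∈ interval c ρ y → y ∈ interval c ρ x → x = y) ∧
    (∀ x y z, x ∈ interval c ρ y → y ∈ interval c ρ z → x ∈ interval c ρ z) ∧
    (∀ x y, c ρ x y ∈ interval c ρ x ∧ c ρ x y ∈ interval c ρ y ∧
      ∀ v, v ∈ interval c ρ x → v ∈ interval c ρ y → v ∈ interval c ρ (c ρ x y)) :=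
  ⟨hc.right_mem_interval ρ,
    fun _ _ => hc.eq_of_mem_interval_of_mem_interval,
    fun _ _ _ => hc.mem_interval_trans,
    fun x y => ⟨hc.median_mem_interval ρ x y, hc.median_mem_interval' ρ x y,
      fun _ => hc.mem_interval_median⟩⟩

theorem stmt_8 [Nonempty T] (c : T → T → T → T) (hc : IsAlgTree c) (ρ : T) :
    (∀ x, x ∈ interval c ρ x) ∧
    (∀ x y, x ∈ interval c ρ y → y ∈ interval c ρ x → x = y) ∧
    (∀ x y z, x ∈ interval c ρ y → y ∈ interval c ρ z → x ∈ interval c ρ z) ∧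
    (∀ x y, c ρ x y ∈ interval c ρ x ∧ c ρ x y ∈ interval c ρ y ∧
      ∀ v, v ∈ interval c ρ x → v ∈ interval c ρ y → v ∈ interval c ρ (c ρ x y)) :=
  stmt_8_general c hc ρ
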